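/- Distributivity of union over intersection for bipolar fuzzy soft sets: (F,A) ∪ ((G,B) ∩ (H,C)) = ((F,A) ∪ (G,B)) ∩ ((F,A) ∪ (H,C)). -/

import Mathlib

/-- A bipolar fuzzy soft set over a universe `U` with parameters from `E`:
a parameter set `carrier ⊆ E` together with, for each parameter, a bipolar
fuzzy set on `U` (positive membership in `[0,1]`, negative membership in
`[-1,0]`).  Parameters outside the carrier are normalized to the value `0`. -/
structure BFSS (U E : Type*) where
  carrier : Set E
  pos : E → U → ℝ
  neg : E → U → ℝ
  pos_nonneg : ∀ e x, 0 ≤ pos e x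
  pos_le_one : ∀ e x, pos e x ≤ 1
  neg_nonpos : ∀ e x, neg e x ≤ 0
  neg_ge_negOne : ∀ e x, -1 ≤ neg e x
  pos_out : ∀ e, e ∉ carrier → ∀ x, pos e x = 0
  neg_out : ∀ e, e ∉ carrier → ∀ x, neg e x = 0

namespace BFSS

variable {U E : Type*}

open scoped Classical

/-- Union of two bipolar fuzzy soft sets: defined on `A ∪ B`,
taking `F` on `A \ B`, `G` on `B \ A`, and the pointwise union
(max of positive parts, min of negative parts) on `A ∩ B`. -/
noncomputable def union (F G : BFSS U E) : BFSS U E where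
  carrier := F.carrier ∪ G.carrier
  pos e x :=
    if e ∈ F.carrier ∧ e ∈ G.carrier then max (F.pos e x) (G.pos e x)
    else if e ∈ F.carrier then F.pos e x
    else if e ∈ G.carrier then G.pos e x
    else 0
  neg e x :=
    if e ∈ F.carrier ∧ e ∈ G.carrier then min (F.neg e x) (G.neg e x)
    else if e ∈ F.carrier then F.neg e x
    else if e ∈ G.carrier then G.neg e x
    else 0
  pos_nonneg e x := by
    (try dsimp only); split_ifs
    · exact le_max_of_le_left (F.pos_nonneg e x)
    · exact F.pos_nonneg e x
    · exact G.pos_nonneg e x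
    · exact le_rfl
  pos_le_one e x := by
    (try dsimp only); split_ifs
    · exact max_le (F.pos_le_one e x) (G.pos_le_one e x)
    · exact F.pos_le_one e x
    · exact G.pos_le_one e x
    · exact zero_le_one
  neg_nonpos e x := by
    (try dsimp only); split_ifs
    · exact min_le_of_left_le (F.neg_nonpos e x)
    · exact F.neg_nonpos e x
    · exact G.neg_nonpos e x
    · exact le_rfl
  neg_ge_negOne e x := by
    (try dsimp only); split_ifs
    · exact le_min (F.neg_ge_negOne e x) (G.neg_ge_negOne e x)
    · exact F.neg_ge_negOne e x
    · exact G.neg_ge_negOne e x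
    · norm_num
  pos_out e he x := by
    (try dsimp only)
    rw [Set.mem_union, not_or] at he
    rw [if_neg (by tauto), if_neg he.1, if_neg he.2]
  neg_out e he x := by
    (try dsimp only)
    rw [Set.mem_union, not_or] at he
    rw [if_neg (by tauto), if_neg he.1, if_neg he.2]

/-- (Restricted) intersection of two bipolar fuzzy soft sets: defined on
`A ∩ B` by the pointwise intersection (min of positive parts, max of
negative parts). -/
noncomputable def inter (F G : BFSS U E) : BFSS U E where
  carrier := F.carrier ∩ G.carrier
  pos e x :=
    if e ∈ F.carrier ∧ e ∈ G.carrier then min (F.pos e x) (G.pos e x) else 0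
  neg e x :=
    if e ∈ F.carrier ∧ e ∈ G.carrier then max (F.neg e x) (G.neg e x) else 0
  pos_nonneg e x := by
    (try dsimp only); split_ifs
    · exact le_min (F.pos_nonneg e x) (G.pos_nonneg e x)
    · exact le_rfl
  pos_le_one e x := by
    (try dsimp only); split_ifs
    · exact min_le_of_left_le (F.pos_le_one e x)
    · exact zero_le_one
  neg_nonpos e x := by
    (try dsimp only); split_ifs
    · exact max_le (F.neg_nonpos e x) (G.neg_nonpos e x)
    · exact le_rfl
  neg_ge_negOne e x := by
    (try dsimp only); split_ifs
    · exact le_max_of_le_left (F.neg_ge_negOne e x)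
    · norm_num
  pos_out e he x := by
    (try dsimp only); rw [Set.mem_inter_iff] at he; rw [if_neg he]
  neg_out e he x := by
    (try dsimp only); rw [Set.mem_inter_iff] at he; rw [if_neg he]

/-- Extended intersection of two bipolar fuzzy soft sets: defined on `A ∪ B`,
taking `F` on `A \ B`, `G` on `B \ A`, and the pointwise intersection
(min of positive parts, max of negative parts) on `A ∩ B`. -/
noncomputable def extInter (F G : BFSS U E) : BFSS U E where
  carrier := F.carrier ∪ G.carrier
  pos e x :=
    if e ∈ F.carrier ∧ e ∈ G.carrier then min (F.pos e x) (G.pos e x)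
    else if e ∈ F.carrier then F.pos e x
    else if e ∈ G.carrier then G.pos e x
    else 0
  neg e x :=
    if e ∈ F.carrier ∧ e ∈ G.carrier then max (F.neg e x) (G.neg e x)
    else if e ∈ F.carrier then F.neg e x
    else if e ∈ G.carrier then G.neg e x
    else 0
  pos_nonneg e x := by
    (try dsimp only); split_ifs
    · exact le_min (F.pos_nonneg e x) (G.pos_nonneg e x)
    · exact F.pos_nonneg e x
    · exact G.pos_nonneg e x
    · exact le_rfl
  pos_le_one e x := by
    (try dsimp only); split_ifs
    · exact min_le_of_left_le (F.pos_le_one e x)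
    · exact F.pos_le_one e x
    · exact G.pos_le_one e x
    · exact zero_le_one
  neg_nonpos e x := by
    (try dsimp only); split_ifs
    · exact max_le (F.neg_nonpos e x) (G.neg_nonpos e x)
    · exact F.neg_nonpos e x
    · exact G.neg_nonpos e x
    · exact le_rfl
  neg_ge_negOne e x := by
    (try dsimp only); split_ifs
    · exact le_max_of_le_left (F.neg_ge_negOne e x)
    · exact F.neg_ge_negOne e x
    · exact G.neg_ge_negOne e x
    · norm_num
  pos_out e he x := by
    (try dsimp only)
    rw [Set.mem_union, not_or] at he
    rw [if_neg (by tauto), if_neg he.1, if_neg he.2]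
  neg_out e he x := by
    (try dsimp only)
    rw [Set.mem_union, not_or] at he
    rw [if_neg (by tauto), if_neg he.1, if_neg he.2]

/-- Complement of a bipolar fuzzy soft set: on its parameter set,
positive membership `1 - μ⁺` and negative membership `-1 - μ⁻`. -/
noncomputable def compl (F : BFSS U E) : BFSS U E where
  carrier := F.carrier
  pos e x := if e ∈ F.carrier then 1 - F.pos e x else 0
  neg e x := if e ∈ F.carrier then -1 - F.neg e x else 0
  pos_nonneg e x := by
    (try dsimp only); split_ifs
    · linarith [F.pos_le_one e x]
    · exact le_rfl
  pos_le_one e x := by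
    (try dsimp only); split_ifs
    · linarith [F.pos_nonneg e x]
    · exact zero_le_one
  neg_nonpos e x := by
    (try dsimp only); split_ifs
    · linarith [F.neg_ge_negOne e x]
    · exact le_rfl
  neg_ge_negOne e x := by
    (try dsimp only); split_ifs
    · linarith [F.neg_nonpos e x]
    · norm_num
  pos_out e he x := by (try dsimp only); rw [if_neg he]
  neg_out e he x := by (try dsimp only); rw [if_neg he]

/-- `(F,A)` is a bipolar fuzzy soft subset of `(G,B)`: `A ⊆ B` and for each
parameter `e ∈ A`, `F e` is a bipolar fuzzy subset of `G e`. -/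
def Subset (F G : BFSS U E) : Prop :=
  F.carrier ⊆ G.carrier ∧
    ∀ e ∈ F.carrier, ∀ x, F.pos e x ≤ G.pos e x ∧ G.neg e x ≤ F.neg e x

/-- The null bipolar fuzzy soft set on a parameter set `A`: every parameter
gets the bipolar fuzzy set with both memberships identically `0`. -/
def null (U : Type*) {E : Type*} (A : Set E) : BFSS U E where
  carrier := A
  pos _ _ := 0
  neg _ _ := 0
  pos_nonneg _ _ := le_rfl
  pos_le_one _ _ := zero_le_one
  neg_nonpos _ _ := le_rfl
  neg_ge_negOne _ _ := by norm_num
  pos_out _ _ _ := rfl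
  neg_out _ _ _ := rfl

/-- AND-operation: `(F,A) ∧ (G,B)` is defined on `A × B` by
`H(a,b) = F(a) ∩ G(b)` (pointwise min of positive parts, max of negative
parts). -/
noncomputable def andOp (F G : BFSS U E) : BFSS U (E × E) where
  carrier := F.carrier ×ˢ G.carrier
  pos p x :=
    if p.1 ∈ F.carrier ∧ p.2 ∈ G.carrier then min (F.pos p.1 x) (G.pos p.2 x)
    else 0
  neg p x :=
    if p.1 ∈ F.carrier ∧ p.2 ∈ G.carrier then max (F.neg p.1 x) (G.neg p.2 x)
    else 0
  pos_nonneg p x := by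
    (try dsimp only); split_ifs
    · exact le_min (F.pos_nonneg p.1 x) (G.pos_nonneg p.2 x)
    · exact le_rfl
  pos_le_one p x := by
    (try dsimp only); split_ifs
    · exact min_le_of_left_le (F.pos_le_one p.1 x)
    · exact zero_le_one
  neg_nonpos p x := by
    (try dsimp only); split_ifs
    · exact max_le (F.neg_nonpos p.1 x) (G.neg_nonpos p.2 x)
    · exact le_rfl
  neg_ge_negOne p x := by
    (try dsimp only); split_ifs
    · exact le_max_of_le_left (F.neg_ge_negOne p.1 x)
    · norm_num
  pos_out p hp x := by
    (try dsimp only); rw [Set.mem_prod] at hp; rw [if_neg hp]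
  neg_out p hp x := by
    (try dsimp only); rw [Set.mem_prod] at hp; rw [if_neg hp]

/-- OR-operation: `(F,A) ∨ (G,B)` is defined on `A × B` by
`H(a,b) = F(a) ∪ G(b)` (pointwise max of positive parts, min of negative
parts). -/
noncomputable def orOp (F G : BFSS U E) : BFSS U (E × E) where
  carrier := F.carrier ×ˢ G.carrier
  pos p x :=
    if p.1 ∈ F.carrier ∧ p.2 ∈ G.carrier then max (F.pos p.1 x) (G.pos p.2 x)
    else 0
  neg p x :=
    if p.1 ∈ F.carrier ∧ p.2 ∈ G.carrier then min (F.neg p.1 x) (G.neg p.2 x)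
    else 0
  pos_nonneg p x := by
    (try dsimp only); split_ifs
    · exact le_max_of_le_left (F.pos_nonneg p.1 x)
    · exact le_rfl
  pos_le_one p x := by
    (try dsimp only); split_ifs
    · exact max_le (F.pos_le_one p.1 x) (G.pos_le_one p.2 x)
    · exact zero_le_one
  neg_nonpos p x := by
    (try dsimp only); split_ifs
    · exact min_le_of_left_le (F.neg_nonpos p.1 x)
    · exact le_rfl
  neg_ge_negOne p x := by
    (try dsimp only); split_ifs
    · exact le_min (F.neg_ge_negOne p.1 x) (G.neg_ge_negOne p.2 x)
    · norm_num
  pos_out p hp x := by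
    (try dsimp only); rw [Set.mem_prod] at hp; rw [if_neg hp]
  neg_out p hp x := by
    (try dsimp only); rw [Set.mem_prod] at hp; rw [if_neg hp]

end BFSS

/-! Positive memberships are nonnegative, negative ones nonpositive, and both vanish off the
parameter set. Hence the case split in `union` and `inter` collapses: on all of `E`, union is the
pointwise max/min and intersection the pointwise min/max, and distributivity is inherited from
the distributive lattices `ℝ` and `Set E`. -/

attribute [ext] BFSS

namespace BFSS

variable {U E : Type*}

theorem pos_union (F G : BFSS U E) (e : E) (x : U) :
    (F.union G).pos e x = max (F.pos e x) (G.pos e x) := by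
  simp only [union]
  split_ifs with hFG hF hG
  · rfl
  · rw [G.pos_out e (fun hG => hFG ⟨hF, hG⟩) x, max_eq_left (F.pos_nonneg e x)]
  · rw [F.pos_out e hF x, max_eq_right (G.pos_nonneg e x)]
  · rw [F.pos_out e hF x, G.pos_out e hG x, max_self]

theorem neg_union (F G : BFSS U E) (e : E) (x : U) :
    (F.union G).neg e x = min (F.neg e x) (G.neg e x) := by
  simp only [union]
  split_ifs with hFG hF hG
  · rfl
  · rw [G.neg_out e (fun hG => hFG ⟨hF, hG⟩) x, min_eq_left (F.neg_nonpos e x)]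
  · rw [F.neg_out e hF x, min_eq_right (G.neg_nonpos e x)]
  · rw [F.neg_out e hF x, G.neg_out e hG x, min_self]

theorem pos_inter (F G : BFSS U E) (e : E) (x : U) :
    (F.inter G).pos e x = min (F.pos e x) (G.pos e x) := by
  simp only [inter]
  split_ifs with hFG
  · rfl
  · by_cases hF : e ∈ F.carrier
    · rw [G.pos_out e (fun hG => hFG ⟨hF, hG⟩) x, min_eq_right (F.pos_nonneg e x)]
    · rw [F.pos_out e hF x, min_eq_left (G.pos_nonneg e x)]

theorem neg_inter (F G : BFSS U E) (e : E) (x : U) :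
    (F.inter G).neg e x = max (F.neg e x) (G.neg e x) := by
  simp only [inter]
  split_ifs with hFG
  · rfl
  · by_cases hF : e ∈ F.carrier
    · rw [G.neg_out e (fun hG => hFG ⟨hF, hG⟩) x, max_eq_right (F.neg_nonpos e x)]
    · rw [F.neg_out e hF x, max_eq_left (G.neg_nonpos e x)]

end BFSS

/-- Distributivity of union over intersection for bipolar fuzzy soft sets. -/
theorem BFSS.union_inter_distrib {U E : Type*} (F G H : BFSS U E) :
    F.union (G.inter H) = (F.union G).inter (F.union H) := by
  ext e x
  · exact Set.ext_iff.mp (Set.union_inter_distrib_left F.carrier G.carrier H.carrier) e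
  · simp only [BFSS.pos_union, BFSS.pos_inter, max_min_distrib_left]
  · simp only [BFSS.neg_union, BFSS.neg_inter, min_max_distrib_left]
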